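/- Negative semidefiniteness of A^{-1}Δ_h (used for unique solvability of the scheme): Let T denote the linear map on interior grid data (real arrays indexed by i = 1,...,N_x, j = 1,...,N_y) that sends u to Δ_h(ext u), where ext u is the extension of u to ghost cells via the discrete Neumann BC. Let Δt > 0, M > 0, β ≥ 0, α ≥ 0, c = 2/Δt^2 + β/Δt, and A = c·I - (M/2)T^3 - (Mα/2)T. Then A is invertible, and for every interior grid datum b one has (A^{-1}(T b), b)_m ≤ 0. -/

import Mathlib

/-!
Summation by parts under the Neumann extension gives
`(T u, v)_m = -((d_x ext u, d_x ext v)_x + (d_y ext u, d_y ext v)_y)`, so `T` is self-adjoint and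
negative semidefinite for the positive definite form `(·,·)_m`. Then
`(T³x, x)_m = (T(Tx), Tx)_m ≤ 0` gives `(A x, x)_m ≥ c (x, x)_m`, so `A` is injective, hence
bijective in finite dimension. Since `A` commutes with `T`, `A z = T b` forces `z = T y` with
`A y = b`, and `(z, b)_m = (T y, A y)_m = c (T y, y)_m - (M/2)‖T²y‖² - (Mα/2)‖T y‖² ≤ 0`.
-/

open Finset

/-- Discrete inner product `(f,g)_m` over interior cells `i = 1,...,Nx`, `j = 1,...,Ny`. -/
noncomputable def innerM (Nx Ny : ℕ) (hx hy : ℝ) (f g : ℕ → ℕ → ℝ) : ℝ :=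
  ∑ i ∈ Finset.Icc 1 Nx, ∑ j ∈ Finset.Icc 1 Ny, hx * hy * f i j * g i j

/-- Discrete inner product `(u,v)_x` for x-edge arrays; index `i` stands for `i + 1/2`. -/
noncomputable def innerX (Nx Ny : ℕ) (hx hy : ℝ) (u v : ℕ → ℕ → ℝ) : ℝ :=
  ∑ i ∈ Finset.Icc 1 (Nx - 1), ∑ j ∈ Finset.Icc 1 Ny, hx * hy * u i j * v i j

/-- Discrete inner product `(u,v)_y` for y-edge arrays; index `j` stands for `j + 1/2`. -/
noncomputable def innerY (Nx Ny : ℕ) (hx hy : ℝ) (u v : ℕ → ℕ → ℝ) : ℝ :=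
  ∑ i ∈ Finset.Icc 1 Nx, ∑ j ∈ Finset.Icc 1 (Ny - 1), hx * hy * u i j * v i j

/-- `[d_x g]_{i+1/2, j}`, stored at index `(i, j)`. -/
noncomputable def dX (hx : ℝ) (g : ℕ → ℕ → ℝ) : ℕ → ℕ → ℝ := fun i j => (g (i + 1) j - g i j) / hx

/-- `[d_y g]_{i, j+1/2}`, stored at index `(i, j)`. -/
noncomputable def dY (hy : ℝ) (g : ℕ → ℕ → ℝ) : ℕ → ℕ → ℝ := fun i j => (g i (j + 1) - g i j) / hy

/-- `[D_x w]_{i,j} = (w_{i+1/2,j} - w_{i-1/2,j})/h_x` for an x-edge array `w`. -/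
noncomputable def DX (hx : ℝ) (w : ℕ → ℕ → ℝ) : ℕ → ℕ → ℝ := fun i j => (w i j - w (i - 1) j) / hx

/-- `[D_y w]_{i,j} = (w_{i,j+1/2} - w_{i,j-1/2})/h_y` for a y-edge array `w`. -/
noncomputable def DY (hy : ℝ) (w : ℕ → ℕ → ℝ) : ℕ → ℕ → ℝ := fun i j => (w i j - w i (j - 1)) / hy

/-- Five-point discrete Laplacian `[Δ_h g]_{i,j}` (meaningful at interior cells). -/
noncomputable def lapH (hx hy : ℝ) (g : ℕ → ℕ → ℝ) : ℕ → ℕ → ℝ := fun i j =>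
  (g (i + 1) j - 2 * g i j + g (i - 1) j) / hx ^ 2 +
  (g i (j + 1) - 2 * g i j + g i (j - 1)) / hy ^ 2

/-- The discrete homogeneous Neumann boundary condition for a grid function. -/
noncomputable def NeumannBC (Nx Ny : ℕ) (g : ℕ → ℕ → ℝ) : Prop :=
  (∀ j ∈ Finset.Icc 1 Ny, g 0 j = g 1 j ∧ g (Nx + 1) j = g Nx j) ∧
  (∀ i ∈ Finset.Icc 1 Nx, g i 0 = g i 1 ∧ g i (Ny + 1) = g i Ny)

/-- Extension of interior data to ghost cells via the discrete Neumann BC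
(clamping of indices to the interior range). -/
noncomputable def extN (Nx Ny : ℕ) (u : ℕ → ℕ → ℝ) : ℕ → ℕ → ℝ := fun i j =>
  u (min (max i 1) Nx) (min (max j 1) Ny)

/-- `‖∇_h g‖² = (d_x g, d_x g)_x + (d_y g, d_y g)_y`. -/
noncomputable def gradSq (Nx Ny : ℕ) (hx hy : ℝ) (g : ℕ → ℕ → ℝ) : ℝ :=
  innerX Nx Ny hx hy (dX hx g) (dX hx g) + innerY Nx Ny hx hy (dY hy g) (dY hy g)

/-- `Δ_h² g`, where `Δ_h g` is extended to ghost cells via its own Neumann BC. -/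
noncomputable def lap2H (Nx Ny : ℕ) (hx hy : ℝ) (g : ℕ → ℕ → ℝ) : ℕ → ℕ → ℝ :=
  lapH hx hy (extN Nx Ny (lapH hx hy g))

/-- `Δ_h³ g`, where `Δ_h g`, `Δ_h² g` are extended to ghost cells via their own Neumann BC. -/
noncomputable def lap3H (Nx Ny : ℕ) (hx hy : ℝ) (g : ℕ → ℕ → ℝ) : ℕ → ℕ → ℝ :=
  lapH hx hy (extN Nx Ny (lap2H Nx Ny hx hy g))

/-- Discrete energy `E_1^h(g) = Σ h_x h_y F(g_{ij})` with `F(s) = s⁴/4`. -/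
noncomputable def E1h (Nx Ny : ℕ) (hx hy : ℝ) (g : ℕ → ℕ → ℝ) : ℝ :=
  ∑ i ∈ Finset.Icc 1 Nx, ∑ j ∈ Finset.Icc 1 Ny, hx * hy * (g i j ^ 4 / 4)

/-- Interior grid data `(i = 1,...,Nx, j = 1,...,Ny)` viewed as a grid function
(arbitrary value `0` outside the interior range). -/
noncomputable def toGrid (Nx Ny : ℕ) (v : Fin Nx → Fin Ny → ℝ) : ℕ → ℕ → ℝ := fun i j =>
  if h : 1 ≤ i ∧ i ≤ Nx ∧ 1 ≤ j ∧ j ≤ Ny then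
    v ⟨i - 1, by omega⟩ ⟨j - 1, by omega⟩ else 0

/-- The discrete inner product `(·,·)_m` on interior grid data. -/
noncomputable def innerV (Nx Ny : ℕ) (hx hy : ℝ) (v w : Fin Nx → Fin Ny → ℝ) : ℝ :=
  ∑ i : Fin Nx, ∑ j : Fin Ny, hx * hy * v i j * w i j

namespace LinearMap.IsSelfAdjoint

variable {𝕜 V : Type*} [Field 𝕜] [LinearOrder 𝕜] [IsStrictOrderedRing 𝕜] [AddCommGroup V]
  [Module 𝕜 V] {B : LinearMap.BilinForm 𝕜 V} {T : Module.End 𝕜 V} {a b c : 𝕜}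

theorem mul_apply_le_apply_sub_smul_pow_three_sub_smul (hT : B.IsSelfAdjoint T)
    (hTneg : ∀ x, B (T x) x ≤ 0) (ha : 0 ≤ a) (hb : 0 ≤ b) (x : V) :
    c * B x x ≤ B ((c • 1 - a • T ^ 3 - b • T : Module.End 𝕜 V) x) x := by
  have hT3 : B ((T ^ 3) x) x ≤ 0 := by
    rw [pow_succ', Module.End.mul_apply, hT, sq, Module.End.mul_apply]
    exact hTneg (T x)
  have := mul_nonpos_of_nonneg_of_nonpos ha hT3
  have := mul_nonpos_of_nonneg_of_nonpos hb (hTneg x)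
  simp only [LinearMap.sub_apply, LinearMap.smul_apply, Module.End.one_apply, map_sub, map_smul,
    smul_eq_mul]
  linarith

theorem injective_sub_smul_pow_three_sub_smul (hB : ∀ x, x ≠ 0 → 0 < B x x)
    (hT : B.IsSelfAdjoint T) (hTneg : ∀ x, B (T x) x ≤ 0) (ha : 0 ≤ a) (hb : 0 ≤ b)
    (hc : 0 < c) : Function.Injective (c • 1 - a • T ^ 3 - b • T : Module.End 𝕜 V) := by
  rw [← LinearMap.ker_eq_bot, LinearMap.ker_eq_bot']
  by_contra! ⟨x, hAx, hx⟩
  have := hT.mul_apply_le_apply_sub_smul_pow_three_sub_smul (c := c) hTneg ha hb x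
  rw [hAx, map_zero, LinearMap.zero_apply] at this
  exact (mul_pos hc (hB x hx)).not_ge this

theorem apply_apply_sub_smul_pow_three_sub_smul_nonpos (hB : ∀ x, 0 ≤ B x x)
    (hT : B.IsSelfAdjoint T) (hTneg : ∀ x, B (T x) x ≤ 0) (ha : 0 ≤ a) (hb : 0 ≤ b)
    (hc : 0 ≤ c) (y : V) : B (T y) ((c • 1 - a • T ^ 3 - b • T : Module.End 𝕜 V) y) ≤ 0 := by
  have hT3 : B (T y) ((T ^ 3) y) = B ((T ^ 2) y) ((T ^ 2) y) := by
    rw [pow_succ', Module.End.mul_apply, ← hT, sq, Module.End.mul_apply]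
  have := mul_nonneg ha (hB ((T ^ 2) y))
  have := mul_nonneg hb (hB (T y))
  have := mul_nonpos_of_nonneg_of_nonpos hc (hTneg y)
  simp only [LinearMap.sub_apply, LinearMap.smul_apply, Module.End.one_apply, map_sub, map_smul,
    smul_eq_mul, hT3]
  linarith

theorem bijective_and_apply_nonpos [FiniteDimensional 𝕜 V] (hB : ∀ x, x ≠ 0 → 0 < B x x)
    (hT : B.IsSelfAdjoint T) (hTneg : ∀ x, B (T x) x ≤ 0) (ha : 0 ≤ a) (hb : 0 ≤ b)
    (hc : 0 < c) :
    Function.Bijective (c • 1 - a • T ^ 3 - b • T : Module.End 𝕜 V) ∧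
      ∀ u z, (c • 1 - a • T ^ 3 - b • T : Module.End 𝕜 V) z = T u → B z u ≤ 0 := by
  set A : Module.End 𝕜 V := c • 1 - a • T ^ 3 - b • T
  have hinj : Function.Injective A := hT.injective_sub_smul_pow_three_sub_smul hB hTneg ha hb hc
  have hsurj : Function.Surjective A := LinearMap.injective_iff_surjective.mp hinj
  refine ⟨⟨hinj, hsurj⟩, fun u z hz => ?_⟩
  obtain ⟨y, rfl⟩ := hsurj u
  have hcomm : Commute A T :=
    (((Commute.one_left T).smul_left c).sub_left
      (((Commute.refl T).pow_left 3).smul_left a)).sub_left ((Commute.refl T).smul_left b)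
  obtain rfl : z = T y :=
    hinj (by rw [hz, ← Module.End.mul_apply, ← hcomm.eq, Module.End.mul_apply])
  have hB_nonneg : ∀ x, 0 ≤ B x x := fun x => by
    rcases eq_or_ne x 0 with rfl | hx
    · simp
    · exact (hB x hx).le
  exact hT.apply_apply_sub_smul_pow_three_sub_smul_nonpos hB_nonneg hTneg ha hb hc.le y

end LinearMap.IsSelfAdjoint

theorem sum_fin_succ_eq_sum_Icc {M : Type*} [AddCommMonoid M] (N : ℕ) (f : ℕ → M) :
    ∑ i : Fin N, f (i + 1) = ∑ i ∈ Icc 1 N, f i := by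
  rw [Fin.sum_univ_eq_sum_range (fun i => f (i + 1)), range_eq_Ico, sum_Ico_add' f]
  rfl

theorem sum_Icc_secondDiff_mul (g w : ℕ → ℝ) (h0 : g 0 = g 1) (N : ℕ) :
    ∑ i ∈ Icc 1 N, (g (i + 1) - 2 * g i + g (i - 1)) * w i
      = (g (N + 1) - g N) * w N - ∑ i ∈ Icc 1 (N - 1), (g (i + 1) - g i) * (w (i + 1) - w i) := by
  induction N with
  | zero => simp [h0]
  | succ n ih =>
    rw [sum_Icc_succ_top (by omega), ih]
    rcases n with _ | m
    · simp only [zero_add, Nat.sub_self, Nat.zero_sub, h0, Icc_eq_empty_of_lt Nat.zero_lt_one,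
        sum_empty]
      ring
    · simp only [Nat.add_sub_cancel]
      rw [sum_Icc_succ_top (by omega : 1 ≤ m + 1)]
      ring

theorem sum_Icc_secondDiff_mul_of_neumann (g w : ℕ → ℝ) (N : ℕ) (h0 : g 0 = g 1)
    (hN : g (N + 1) = g N) :
    ∑ i ∈ Icc 1 N, (g (i + 1) - 2 * g i + g (i - 1)) * w i
      = -∑ i ∈ Icc 1 (N - 1), (g (i + 1) - g i) * (w (i + 1) - w i) := by
  rw [sum_Icc_secondDiff_mul g w h0, hN, sub_self, zero_mul, zero_sub]

theorem innerM_lapH_of_neumannBC {Nx Ny : ℕ} (hx hy : ℝ) {g : ℕ → ℕ → ℝ}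
    (hg : NeumannBC Nx Ny g) (h : ℕ → ℕ → ℝ) :
    innerM Nx Ny hx hy (lapH hx hy g) h
      = -(innerX Nx Ny hx hy (dX hx g) (dX hx h) + innerY Nx Ny hx hy (dY hy g) (dY hy h)) := by
  have sbp_x : ∑ i ∈ Icc 1 Nx, ∑ j ∈ Icc 1 Ny, (g (i + 1) j - 2 * g i j + g (i - 1) j) * h i j
      = -∑ i ∈ Icc 1 (Nx - 1), ∑ j ∈ Icc 1 Ny, (g (i + 1) j - g i j) * (h (i + 1) j - h i j) := by
    rw [sum_comm, sum_comm (s := Icc 1 (Nx - 1)), ← sum_neg_distrib]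
    exact sum_congr rfl fun j hj =>
      sum_Icc_secondDiff_mul_of_neumann (g · j) (h · j) Nx (hg.1 j hj).1 (hg.1 j hj).2
  have sbp_y : ∑ i ∈ Icc 1 Nx, ∑ j ∈ Icc 1 Ny, (g i (j + 1) - 2 * g i j + g i (j - 1)) * h i j
      = -∑ i ∈ Icc 1 Nx, ∑ j ∈ Icc 1 (Ny - 1), (g i (j + 1) - g i j) * (h i (j + 1) - h i j) := by
    rw [← sum_neg_distrib]
    exact sum_congr rfl fun i hi =>
      sum_Icc_secondDiff_mul_of_neumann (g i) (h i) Ny (hg.2 i hi).1 (hg.2 i hi).2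
  -- The factors `hx * hy / hx ^ 2`, not `hy / hx`, keep every step valid at `hx = 0`.
  calc innerM Nx Ny hx hy (lapH hx hy g) h
      = hx * hy / hx ^ 2 * ∑ i ∈ Icc 1 Nx, ∑ j ∈ Icc 1 Ny,
            (g (i + 1) j - 2 * g i j + g (i - 1) j) * h i j
        + hx * hy / hy ^ 2 * ∑ i ∈ Icc 1 Nx, ∑ j ∈ Icc 1 Ny,
            (g i (j + 1) - 2 * g i j + g i (j - 1)) * h i j := by
        simp only [innerM, lapH, mul_sum, ← sum_add_distrib]
        exact sum_congr rfl fun i _ => sum_congr rfl fun j _ => by ring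
    _ = _ := by
        simp only [sbp_x, sbp_y, innerX, innerY, dX, dY, mul_neg, mul_sum, neg_add]
        congr 1 <;> congr 1 <;> exact sum_congr rfl fun i _ => sum_congr rfl fun j _ => by ring

theorem innerX_comm (Nx Ny : ℕ) (hx hy : ℝ) (u v : ℕ → ℕ → ℝ) :
    innerX Nx Ny hx hy u v = innerX Nx Ny hx hy v u :=
  sum_congr rfl fun _ _ => sum_congr rfl fun _ _ => by ring

theorem innerY_comm (Nx Ny : ℕ) (hx hy : ℝ) (u v : ℕ → ℕ → ℝ) :
    innerY Nx Ny hx hy u v = innerY Nx Ny hx hy v u :=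
  sum_congr rfl fun _ _ => sum_congr rfl fun _ _ => by ring

theorem innerV_comm (Nx Ny : ℕ) (hx hy : ℝ) (v w : Fin Nx → Fin Ny → ℝ) :
    innerV Nx Ny hx hy v w = innerV Nx Ny hx hy w v :=
  sum_congr rfl fun _ _ => sum_congr rfl fun _ _ => by ring

theorem gradSq_nonneg (Nx Ny : ℕ) {hx hy : ℝ} (hhx : 0 ≤ hx) (hhy : 0 ≤ hy) (g : ℕ → ℕ → ℝ) :
    0 ≤ gradSq Nx Ny hx hy g := by
  unfold gradSq innerX innerY
  have hxy := mul_nonneg hhx hhy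
  exact add_nonneg (sum_nonneg fun _ _ => sum_nonneg fun _ _ => by
      rw [mul_assoc]; exact mul_nonneg hxy (mul_self_nonneg _))
    (sum_nonneg fun _ _ => sum_nonneg fun _ _ => by
      rw [mul_assoc]; exact mul_nonneg hxy (mul_self_nonneg _))

theorem innerV_self_pos (Nx Ny : ℕ) {hx hy : ℝ} (hhx : 0 < hx) (hhy : 0 < hy)
    {v : Fin Nx → Fin Ny → ℝ} (hv : v ≠ 0) : 0 < innerV Nx Ny hx hy v v := by
  obtain ⟨i, hi⟩ := Function.ne_iff.mp hv
  obtain ⟨j, hj⟩ := Function.ne_iff.mp hi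
  have hxy := mul_pos hhx hhy
  have hterm : ∀ i j, 0 ≤ hx * hy * v i j * v i j := fun i j => by
    rw [mul_assoc]; exact mul_nonneg hxy.le (mul_self_nonneg _)
  refine sum_pos' (fun i _ => sum_nonneg fun j _ => hterm i j) ⟨i, mem_univ i, ?_⟩
  refine sum_pos' (fun j _ => hterm i j) ⟨j, mem_univ j, ?_⟩
  rw [mul_assoc]
  exact mul_pos hxy (mul_self_pos.mpr hj)

theorem neumannBC_extN (Nx Ny : ℕ) (u : ℕ → ℕ → ℝ) : NeumannBC Nx Ny (extN Nx Ny u) := by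
  refine ⟨fun j _ => ⟨?_, ?_⟩, fun i _ => ⟨?_, ?_⟩⟩ <;> unfold extN <;> congr 1 <;> omega

theorem extN_toGrid_succ (Nx Ny : ℕ) (v : Fin Nx → Fin Ny → ℝ) (i : Fin Nx) (j : Fin Ny) :
    extN Nx Ny (toGrid Nx Ny v) (i + 1) (j + 1) = v i j := by
  have hi := i.isLt
  have hj := j.isLt
  rw [extN, toGrid, dif_pos (by omega)]
  congr <;> omega

theorem innerV_eq_innerM (Nx Ny : ℕ) (hx hy : ℝ) (f g : ℕ → ℕ → ℝ) :
    innerV Nx Ny hx hy (fun i j => f ((i : ℕ) + 1) ((j : ℕ) + 1))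
      (fun i j => g ((i : ℕ) + 1) ((j : ℕ) + 1))
      = innerM Nx Ny hx hy f g := by
  rw [innerV, innerM, ← sum_fin_succ_eq_sum_Icc]
  exact sum_congr rfl fun i _ => sum_fin_succ_eq_sum_Icc Ny (fun j => hx * hy * f _ j * g _ j)

section NeumannLaplacian

variable {Nx Ny : ℕ} {hx hy : ℝ} {T : (Fin Nx → Fin Ny → ℝ) → Fin Nx → Fin Ny → ℝ}

theorem innerV_lap (hT : ∀ v i j,
      T v i j = lapH hx hy (extN Nx Ny (toGrid Nx Ny v)) ((i : ℕ) + 1) ((j : ℕ) + 1))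
    (u v : Fin Nx → Fin Ny → ℝ) :
    innerV Nx Ny hx hy (T u) v
      = -(innerX Nx Ny hx hy (dX hx (extN Nx Ny (toGrid Nx Ny u)))
            (dX hx (extN Nx Ny (toGrid Nx Ny v)))
          + innerY Nx Ny hx hy (dY hy (extN Nx Ny (toGrid Nx Ny u)))
            (dY hy (extN Nx Ny (toGrid Nx Ny v)))) := by
  have hv : v = fun (i : Fin Nx) (j : Fin Ny) =>
      extN Nx Ny (toGrid Nx Ny v) ((i : ℕ) + 1) ((j : ℕ) + 1) :=
    funext₂ fun i j => (extN_toGrid_succ Nx Ny v i j).symm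
  rw [funext₂ (hT u), hv, innerV_eq_innerM, ← hv]
  exact innerM_lapH_of_neumannBC hx hy (neumannBC_extN Nx Ny _) _

theorem innerV_lap_comm (hT : ∀ v i j,
      T v i j = lapH hx hy (extN Nx Ny (toGrid Nx Ny v)) ((i : ℕ) + 1) ((j : ℕ) + 1))
    (u v : Fin Nx → Fin Ny → ℝ) :
    innerV Nx Ny hx hy (T u) v = innerV Nx Ny hx hy u (T v) := by
  rw [innerV_comm _ _ _ _ u, innerV_lap hT, innerV_lap hT, innerX_comm, innerY_comm]

theorem innerV_lap_self_nonpos (hhx : 0 ≤ hx) (hhy : 0 ≤ hy) (hT : ∀ v i j,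
      T v i j = lapH hx hy (extN Nx Ny (toGrid Nx Ny v)) ((i : ℕ) + 1) ((j : ℕ) + 1))
    (u : Fin Nx → Fin Ny → ℝ) : innerV Nx Ny hx hy (T u) u ≤ 0 := by
  rw [innerV_lap hT, neg_nonpos]
  exact gradSq_nonneg Nx Ny hhx hhy _

end NeumannLaplacian

noncomputable def innerVForm (Nx Ny : ℕ) (hx hy : ℝ) :
    LinearMap.BilinForm ℝ (Fin Nx → Fin Ny → ℝ) := by
  refine LinearMap.mk₂ ℝ (innerV Nx Ny hx hy) ?_ ?_ ?_ ?_ <;> intros <;>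
    simp only [innerV, Pi.add_apply, Pi.smul_apply, smul_eq_mul, mul_sum, ← sum_add_distrib] <;>
    exact sum_congr rfl fun _ _ => sum_congr rfl fun _ _ => by ring

theorem inverse_A_lap_negative_semidefinite_general
    (Nx Ny : ℕ)
    (hx hy : ℝ) (hhx : 0 < hx) (hhy : 0 < hy)
    (Δt M β α c : ℝ) (hΔt : 0 < Δt) (hM : 0 < M) (hβ : 0 ≤ β) (hα : 0 ≤ α)
    (hc : c = 2 / Δt ^ 2 + β / Δt)
    (T : Module.End ℝ (Fin Nx → Fin Ny → ℝ))
    (hT : ∀ (v : Fin Nx → Fin Ny → ℝ) (i : Fin Nx) (j : Fin Ny),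
      T v i j = lapH hx hy (extN Nx Ny (toGrid Nx Ny v)) ((i : ℕ) + 1) ((j : ℕ) + 1))
    (A : Module.End ℝ (Fin Nx → Fin Ny → ℝ))
    (hA : A = c • (1 : Module.End ℝ (Fin Nx → Fin Ny → ℝ)) - (M / 2) • T ^ 3
        - (M * α / 2) • T) :
    Function.Bijective A ∧
    ∀ b z : Fin Nx → Fin Ny → ℝ, A z = T b → innerV Nx Ny hx hy z b ≤ 0 := by
  have hc_pos : 0 < c := by rw [hc]; positivity
  have hT_selfAdjoint : (innerVForm Nx Ny hx hy).IsSelfAdjoint T := innerV_lap_comm hT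
  subst hA
  exact hT_selfAdjoint.bijective_and_apply_nonpos (fun _ => innerV_self_pos Nx Ny hhx hhy)
    (innerV_lap_self_nonpos hhx.le hhy.le hT) (by positivity) (by positivity) hc_pos

/-- Negative semidefiniteness of `A⁻¹Δ_h`: with `T` the map `u ↦ Δ_h(ext u)` on
interior grid data and `A = cI - (M/2)T³ - (Mα/2)T`, `c = 2/Δt² + β/Δt`,
the operator `A` is invertible and `(A⁻¹(T b), b)_m ≤ 0` for every `b`. -/
theorem inverse_A_lap_negative_semidefinite
    (Nx Ny : ℕ) (hNx : 1 ≤ Nx) (hNy : 1 ≤ Ny)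
    (hx hy : ℝ) (hhx : 0 < hx) (hhy : 0 < hy)
    (Δt M β α c : ℝ) (hΔt : 0 < Δt) (hM : 0 < M) (hβ : 0 ≤ β) (hα : 0 ≤ α)
    (hc : c = 2 / Δt ^ 2 + β / Δt)
    (T : Module.End ℝ (Fin Nx → Fin Ny → ℝ))
    (hT : ∀ (v : Fin Nx → Fin Ny → ℝ) (i : Fin Nx) (j : Fin Ny),
      T v i j = lapH hx hy (extN Nx Ny (toGrid Nx Ny v)) ((i : ℕ) + 1) ((j : ℕ) + 1))
    (A : Module.End ℝ (Fin Nx → Fin Ny → ℝ))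
    (hA : A = c • (1 : Module.End ℝ (Fin Nx → Fin Ny → ℝ)) - (M / 2) • T ^ 3
        - (M * α / 2) • T) :
    Function.Bijective A ∧
    ∀ b z : Fin Nx → Fin Ny → ℝ, A z = T b → innerV Nx Ny hx hy z b ≤ 0 :=
  inverse_A_lap_negative_semidefinite_general Nx Ny hx hy hhx hhy Δt M β α c hΔt hM hβ hα hc T hT A
    hA
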